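/- arXiv:1708.02442 — 2 statements merged into one kernel-verified Lean document; each statement's English description precedes it below -/
import Mathlib

section
/- Let K be an infinite field, u = (u_1,…,u_r) and x = (x_1,…,x_s) indeterminates, and M = [g_ij(u,x)] an m×n matrix (n ≤ m) with entries in K[u,x]. For a ∈ K^r let M_a = [g_ij(a,x)] ∈ Mat(m,n,K[x]). Then for generic a ∈ K^r and for all t ∈ {1,…,n}, the specialization of the extension of the determinantal ideal equals the determinantal ideal of the specialized matrix: I_t(M_a) = (I_t(M)^e)_a. -/
/-- A subset of `ι → K` is Zariski open if it is the complement of the common zero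
locus of a set of polynomials. -/
def ZariskiOpen {K : Type*} [CommRing K] {ι : Type*} (U : Set (ι → K)) : Prop :=
  ∃ S : Set (MvPolynomial ι K), U = { a | ∃ p ∈ S, MvPolynomial.eval a p ≠ 0 }

/-- `detIdeal t M` is the ideal `I_t(M)` generated by all `t × t` minors of `M`. -/
noncomputable def detIdeal {A : Type*} [CommRing A] {m n : ℕ} (t : ℕ)
    (M : Matrix (Fin m) (Fin n) A) : Ideal A :=
  Ideal.span { d | ∃ (f : Fin t → Fin m) (g : Fin t → Fin n), d = (M.submatrix f g).det }

/-- The inclusion `K[u][x] → K(u)[x]`. -/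
noncomputable def incKux (K : Type*) [Field K] (r s : ℕ) :
    MvPolynomial (Fin s) (MvPolynomial (Fin r) K) →+*
      MvPolynomial (Fin s) (FractionRing (MvPolynomial (Fin r) K)) :=
  MvPolynomial.map (algebraMap (MvPolynomial (Fin r) K) (FractionRing (MvPolynomial (Fin r) K)))

/-- The substitution `K[u][x] → K[x]`, `u ↦ a`. -/
noncomputable def subKux {K : Type*} [Field K] {r s : ℕ} (a : Fin r → K) :
    MvPolynomial (Fin s) (MvPolynomial (Fin r) K) →+* MvPolynomial (Fin s) K :=
  MvPolynomial.map (MvPolynomial.eval a)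

/-- The extension `J^e = J·K(u)[x]` of an ideal `J ⊆ K[u][x]`. -/
noncomputable def extIdeal {K : Type*} [Field K] {r s : ℕ}
    (J : Ideal (MvPolynomial (Fin s) (MvPolynomial (Fin r) K))) :
    Ideal (MvPolynomial (Fin s) (FractionRing (MvPolynomial (Fin r) K))) :=
  Ideal.map (incKux K r s) J

/-- The specialization `I_a = {f(a,x) | f(u,x) ∈ I ∩ K[u][x]}` of an ideal
`I ⊆ K(u)[x]` at `a ∈ K^r`. -/
noncomputable def specIdeal {K : Type*} [Field K] {r s : ℕ} (a : Fin r → K)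
    (I : Ideal (MvPolynomial (Fin s) (FractionRing (MvPolynomial (Fin r) K)))) :
    Ideal (MvPolynomial (Fin s) K) :=
  Ideal.map (subKux a) (Ideal.comap (incKux K r s) I)

attribute [local instance] MvPolynomial.algebraMvPolynomial

/-- Denominator clearing: if `inc f ∈ J^e` then `d · f ∈ J` for some nonzero `d ∈ K[u]`. -/
theorem aux_clear_denom {K : Type*} [Field K] {r s : ℕ}
    (J : Ideal (MvPolynomial (Fin s) (MvPolynomial (Fin r) K)))
    (f : MvPolynomial (Fin s) (MvPolynomial (Fin r) K))
    (hf : incKux K r s f ∈ Ideal.map (incKux K r s) J) :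
    ∃ d : MvPolynomial (Fin r) K, d ≠ 0 ∧ MvPolynomial.C d * f ∈ J := by
  set R := MvPolynomial (Fin r) K
  have hmap : incKux K r s = algebraMap (MvPolynomial (Fin s) R)
      (MvPolynomial (Fin s) (FractionRing R)) := rfl
  rw [hmap] at hf
  rw [IsLocalization.mem_map_algebraMap_iff ((nonZeroDivisors R).map MvPolynomial.C)
    (MvPolynomial (Fin s) (FractionRing R))] at hf
  obtain ⟨⟨g, m⟩, h⟩ := hf
  obtain ⟨d, hd, hdm⟩ := m.2
  refine ⟨d, nonZeroDivisors.ne_zero hd, ?_⟩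
  have hinj : Function.Injective (algebraMap (MvPolynomial (Fin s) R)
      (MvPolynomial (Fin s) (FractionRing R))) :=
    MvPolynomial.map_injective _ (IsFractionRing.injective R (FractionRing R))
  have : MvPolynomial.C d * f = (g : MvPolynomial (Fin s) R) := by
    apply hinj
    rw [map_mul, mul_comm, hdm]; exact h
  rw [this]; exact g.2

/-- Determinantal ideals commute with ring maps. -/
theorem aux_map_detIdeal {A B : Type*} [CommRing A] [CommRing B] (φ : A →+* B) {m n : ℕ}
    (t : ℕ) (M : Matrix (Fin m) (Fin n) A) :
    Ideal.map φ (detIdeal t M) = detIdeal t (M.map φ) := by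
  rw [detIdeal, detIdeal, Ideal.map_span]
  congr 1
  ext d
  constructor
  · rintro ⟨e, ⟨f, g, rfl⟩, rfl⟩
    exact ⟨f, g, by rw [Matrix.submatrix_map]; exact RingHom.map_det φ _⟩
  · rintro ⟨f, g, rfl⟩
    exact ⟨(M.submatrix f g).det, ⟨f, g, rfl⟩,
      by rw [Matrix.submatrix_map]; exact RingHom.map_det φ _⟩

/-- For each ideal `J` of `K[u][x]` there is a single nonzero `D ∈ K[u]` such that at every
point `a` where `D` does not vanish, the specialization of the saturation of `J` is contained
in the image of `J`. -/
theorem aux_generic_denom {K : Type*} [Field K] {r s : ℕ}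
    (J : Ideal (MvPolynomial (Fin s) (MvPolynomial (Fin r) K))) :
    ∃ D : MvPolynomial (Fin r) K, D ≠ 0 ∧ ∀ a : Fin r → K, MvPolynomial.eval a D ≠ 0 →
      Ideal.map (subKux a) (Ideal.comap (incKux K r s) (Ideal.map (incKux K r s) J)) ≤
        Ideal.map (subKux a) J := by
  classical
  set C := Ideal.comap (incKux K r s) (Ideal.map (incKux K r s) J) with hC
  obtain ⟨G, hG⟩ : C.FG := IsNoetherian.noetherian C
  have hmem : ∀ g ∈ G, ∃ d : MvPolynomial (Fin r) K, d ≠ 0 ∧ MvPolynomial.C d * g ∈ J := by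
    intro g hg
    have hgC : g ∈ C := by rw [← hG]; exact Ideal.subset_span hg
    exact aux_clear_denom J g hgC
  choose! d hd0 hdJ using hmem
  refine ⟨∏ g ∈ G, d g, Finset.prod_ne_zero_iff.2 fun g hg => hd0 g hg, ?_⟩
  intro a ha
  have hda : ∀ g ∈ G, MvPolynomial.eval a (d g) ≠ 0 := by
    intro g hg hz
    apply ha
    rw [map_prod]
    exact Finset.prod_eq_zero hg hz
  rw [← hG, Ideal.map_span]
  rw [Ideal.span_le]
  rintro y ⟨g, hg, rfl⟩
  have h1 : subKux a (MvPolynomial.C (d g) * g) ∈ Ideal.map (subKux a) J :=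
    Ideal.mem_map_of_mem _ (hdJ g hg)
  have h2 : subKux a (MvPolynomial.C (d g) * g)
      = MvPolynomial.C (MvPolynomial.eval a (d g)) * subKux a g := by
    rw [map_mul, subKux, MvPolynomial.map_C]
  have h3 : subKux a g = MvPolynomial.C (MvPolynomial.eval a (d g))⁻¹ *
      (MvPolynomial.C (MvPolynomial.eval a (d g)) * subKux a g) := by
    rw [← mul_assoc, ← map_mul, inv_mul_cancel₀ (hda g hg), map_one, one_mul]
  rw [h3, ← h2]
  exact Ideal.mul_mem_left _ _ h1

set_option maxHeartbeats 800000 in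
/-- For an `m × n` matrix `M` (`n ≤ m`) with entries in `K[u][x]`, `K` infinite, and
for generic `a ∈ K^r`, the specialization of the extension of each determinantal
ideal of `M` equals the determinantal ideal of the specialized matrix:
`I_t(M_a) = (I_t(M)^e)_a` for all `t = 1, …, n`. -/
theorem specialization_extension_detIdeal
    {K : Type*} [Field K] [Infinite K] {r s m n : ℕ} (hnm : n ≤ m)
    (M : Matrix (Fin m) (Fin n) (MvPolynomial (Fin s) (MvPolynomial (Fin r) K))) :
    ∃ U : Set (Fin r → K), ZariskiOpen U ∧ U.Nonempty ∧
      ∀ a ∈ U, ∀ t : ℕ, 1 ≤ t → t ≤ n →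
        detIdeal t (M.map (subKux a)) = specIdeal a (extIdeal (detIdeal t M)) := by
  classical
  choose D hD0 hD using fun t : ℕ => aux_generic_denom (detIdeal t M)
  set p : MvPolynomial (Fin r) K := ∏ t ∈ Finset.range (n + 1), D t with hp
  have hp0 : p ≠ 0 := Finset.prod_ne_zero_iff.2 fun t _ => hD0 t
  refine ⟨{ a | MvPolynomial.eval a p ≠ 0 }, ⟨{p}, by ext a; simp⟩, ?_, ?_⟩
  · by_contra h
    rw [Set.not_nonempty_iff_eq_empty] at h
    apply hp0
    apply MvPolynomial.funext
    intro x
    rw [map_zero]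
    by_contra hx
    exact Set.eq_empty_iff_forall_notMem.1 h x hx
  · intro a ha t _ htn
    have haD : MvPolynomial.eval a (D t) ≠ 0 := by
      intro hz
      apply ha
      show MvPolynomial.eval a p = 0
      rw [hp, map_prod]
      exact Finset.prod_eq_zero (Finset.mem_range.2 (Nat.lt_succ_of_le htn)) hz
    rw [specIdeal, extIdeal, ← aux_map_detIdeal]
    exact le_antisymm (Ideal.map_mono (Ideal.le_comap_map)) (hD t a haD)
end

section
/- Let Q be a commutative unital Noetherian local ring and let I ⊆ Q be an ideal generated by each of two lists of m elements, a_1,…,a_m and b_1,…,b_m. Let A = [a_1 … a_m]^T and B = [b_1 … b_m]^T be the corresponding column matrices. Then there is an invertible matrix U ∈ GL(m,Q) with B = U·A. -/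
/-!
Let `f g : Rᵐ → M` have the same image, `R` local with residue field `k`. Then `g = f ∘ V` and
`f = g ∘ W` for matrices `V`, `W`, and `V` may be changed by any matrix whose columns lie in
`K = ker f`. Let `K̄ ⊆ kᵐ` be the image of `K`. The quotient map `kᵐ → kᵐ / K̄` and its composite
with `V̄` are both surjective (every `x` differs from `V W x` by an element of `K`), so they differ
by an automorphism `T̄` of `kᵐ`: over a field, their kernels have the same dimension. The columns
of `T̄ - V̄` lie in `K̄`, so it lifts to some `C` with columns in `K`; then `g = f ∘ (V + C)`, and
`V + C` is invertible because its reduction `T̄` is.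
-/

open Matrix IsLocalRing

theorem LinearMap.exists_linearEquiv_comp_eq_of_surjective {K E N : Type*} [DivisionRing K]
    [AddCommGroup E] [Module K E] [FiniteDimensional K E] [AddCommGroup N] [Module K N]
    {f g : E →ₗ[K] N} (hf : Function.Surjective f) (hg : Function.Surjective g) :
    ∃ T : E ≃ₗ[K] E, f ∘ₗ T = g := by
  have hker : Module.finrank K (ker g) = Module.finrank K (ker f) := by
    have hf' := f.finrank_range_add_finrank_ker
    have hg' := g.finrank_range_add_finrank_ker
    rw [range_eq_top.2 hf] at hf'
    rw [range_eq_top.2 hg] at hg'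
    omega
  obtain ⟨sf, hsf⟩ := f.exists_rightInverse_of_surjective (range_eq_top.2 hf)
  obtain ⟨sg, hsg⟩ := g.exists_rightInverse_of_surjective (range_eq_top.2 hg)
  -- splittings `E ≃ ker f × N` and `E ≃ ker g × N` under which `f` and `g` become `snd`
  let ef := f.exact_subtype_ker_map.splitSurjectiveEquiv (ker f).injective_subtype ⟨sf, hsf⟩
  let eg := g.exact_subtype_ker_map.splitSurjectiveEquiv (ker g).injective_subtype ⟨sg, hsg⟩
  have hfe : ∀ y, f y = (ef.1 y).2 := LinearMap.congr_fun ef.2.2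
  have hge : ∀ y, g y = (eg.1 y).2 := LinearMap.congr_fun eg.2.2
  refine ⟨eg.1.trans (((LinearEquiv.ofFinrankEq _ _ hker).prodCongr (.refl K N)).trans ef.1.symm),
    ?_⟩
  ext x
  simp [hfe, hge]

theorem LinearMap.exists_comp_mulVecLin_eq_of_range_le {R M ι κ : Type*} [CommRing R]
    [AddCommGroup M] [Module R M] [Fintype ι] [DecidableEq ι]
    (f : (κ → R) →ₗ[R] M) (g : (ι → R) →ₗ[R] M) (h : range g ≤ range f) :
    ∃ V : Matrix κ ι R, f ∘ₗ V.mulVecLin = g := by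
  choose v hv using fun i => h ⟨Pi.single i 1, rfl⟩
  refine ⟨(Matrix.of v)ᵀ, ?_⟩
  ext i
  simpa [mulVec_single_one] using hv i

namespace IsLocalRing

variable {R : Type*} [CommRing R] [IsLocalRing R]

instance : RingHomSurjective (residue R) := ⟨residue_surjective⟩

variable (R) in
noncomputable def residuePi (ι : Type*) : (ι → R) →ₛₗ[residue R] (ι → ResidueField R) where
  toFun x := residue R ∘ x
  map_add' x y := by ext; simp
  map_smul' c x := by ext; simp

variable {ι κ : Type*}

theorem residuePi_surjective : Function.Surjective (residuePi R ι) :=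
  residue_surjective.comp_left

variable [Fintype ι]

theorem residuePi_mulVec (A : Matrix κ ι R) (x : ι → R) :
    residuePi R κ (A *ᵥ x) = A.map (residue R) *ᵥ residuePi R ι x :=
  funext (RingHom.map_mulVec (residue R) A x)

theorem _root_.Matrix.isUnit_of_isUnit_map_residue [DecidableEq ι] {A : Matrix ι ι R}
    (h : IsUnit (A.map (residue R))) : IsUnit A := by
  rw [isUnit_iff_isUnit_det] at h ⊢
  rwa [← RingHom.mapMatrix_apply, ← RingHom.map_det, isUnit_map_iff] at h

theorem exists_matrix_map_residue_eq_of_range_le [DecidableEq ι] {K : Submodule R (κ → R)}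
    {D : Matrix κ ι (ResidueField R)} (hD : LinearMap.range D.mulVecLin ≤ K.map (residuePi R κ)) :
    ∃ C : Matrix κ ι R, C.map (residue R) = D ∧ LinearMap.range C.mulVecLin ≤ K := by
  have hcol (i : ι) : D.col i ∈ K.map (residuePi R κ) :=
    hD ⟨Pi.single i 1, D.mulVec_single_one i⟩
  choose c hcK hc using hcol
  refine ⟨(Matrix.of c)ᵀ, ?_, ?_⟩
  · ext j i
    exact congrFun (hc i) j
  · rw [range_mulVecLin, Submodule.span_le]
    rintro _ ⟨i, rfl⟩
    exact hcK i

theorem exists_isUnit_comp_mulVecLin_eq {M : Type*} [AddCommGroup M] [Module R M]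
    [DecidableEq ι] (f g : (ι → R) →ₗ[R] M) (h : LinearMap.range f = LinearMap.range g) :
    ∃ U : Matrix ι ι R, IsUnit U ∧ f ∘ₗ U.mulVecLin = g := by
  obtain ⟨V, hV⟩ := f.exists_comp_mulVecLin_eq_of_range_le g h.ge
  obtain ⟨W, hW⟩ := g.exists_comp_mulVecLin_eq_of_range_le f h.le
  set S := (LinearMap.ker f).map (residuePi R ι)
  set V' := V.map (residue R)
  have hsurj : Function.Surjective (S.mkQ ∘ₗ V'.mulVecLin) := by
    intro y
    obtain ⟨y, rfl⟩ := S.mkQ_surjective y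
    obtain ⟨x, rfl⟩ := residuePi_surjective y
    refine ⟨residuePi R ι (W *ᵥ x), (Submodule.Quotient.eq S).2 ?_⟩
    have hx : V *ᵥ (W *ᵥ x) - x ∈ LinearMap.ker f := by
      have hV' : f (V *ᵥ (W *ᵥ x)) = g (W *ᵥ x) := LinearMap.congr_fun hV _
      have hW' : g (W *ᵥ x) = f x := LinearMap.congr_fun hW x
      rw [LinearMap.mem_ker, map_sub, hV', hW', sub_self]
    have hx' := Submodule.mem_map_of_mem (f := residuePi R ι) hx
    rwa [map_sub, residuePi_mulVec] at hx'
  obtain ⟨T, hT⟩ := LinearMap.exists_linearEquiv_comp_eq_of_surjective S.mkQ_surjective hsurj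
  have hD : LinearMap.range (LinearMap.toMatrix' T.toLinearMap - V').mulVecLin ≤ S := by
    rintro _ ⟨x, rfl⟩
    have hTx : S.mkQ (T x) = S.mkQ (V' *ᵥ x) := LinearMap.congr_fun hT x
    simpa [sub_mulVec] using (Submodule.Quotient.eq S).1 hTx
  obtain ⟨C, hC, hCK⟩ := exists_matrix_map_residue_eq_of_range_le hD
  refine ⟨V + C, isUnit_of_isUnit_map_residue ?_, ?_⟩
  · have hVC : (V + C).map (residue R) = LinearMap.toMatrix' T.toLinearMap := by
      rw [Matrix.map_add _ (map_add _), hC, add_sub_cancel]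
    rw [hVC, LinearMap.isUnit_toMatrix'_iff, Module.End.isUnit_iff]
    exact T.bijective
  · rw [mulVecLin_add, LinearMap.comp_add, hV, LinearMap.range_le_ker_iff.1 hCK, add_zero]

end IsLocalRing

theorem exists_invertible_matrix_of_span_eq_general
    {Q : Type*} [CommRing Q] [IsLocalRing Q] {m : ℕ}
    (a b : Fin m → Q) (h : Ideal.span (Set.range a) = Ideal.span (Set.range b)) :
    ∃ U : Matrix (Fin m) (Fin m) Q, IsUnit U ∧ b = U.mulVec a := by
  obtain ⟨U, hU, hab⟩ := exists_isUnit_comp_mulVecLin_eq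
    (Fintype.linearCombination Q a) (Fintype.linearCombination Q b)
    (by rwa [Fintype.range_linearCombination, Fintype.range_linearCombination])
  refine ⟨Uᵀ, (isUnit_transpose U).2 hU, funext fun i => ?_⟩
  have hi := LinearMap.congr_fun hab (Pi.single i 1)
  simpa [mulVec_single_one, mulVec, dotProduct, Pi.single_apply,
    Fintype.linearCombination_apply] using hi.symm

/-- If an ideal of a commutative unital Noetherian local ring `Q` is generated by
each of two lists `a_1,…,a_m` and `b_1,…,b_m` of `m` elements, then there is an
invertible matrix `U ∈ GL(m,Q)` with `b_i = ∑_j U_ij · a_j` for all `i`. -/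
theorem exists_invertible_matrix_of_span_eq
    {Q : Type*} [CommRing Q] [IsNoetherianRing Q] [IsLocalRing Q] {m : ℕ}
    (a b : Fin m → Q) (h : Ideal.span (Set.range a) = Ideal.span (Set.range b)) :
    ∃ U : Matrix (Fin m) (Fin m) Q, IsUnit U ∧ b = U.mulVec a :=
  exists_invertible_matrix_of_span_eq_general a b h
end
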